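/- Let X^n, Y^n, K, M be finite random variables such that (X^n,Y^n) is independent of K and the Markov chain Y^n → (X^n, K) → M holds. Then I(X^n; K | M) − I(Y^n; K | M) = I(X^n; K | Y^n, M). -/
import Mathlib


open scoped BigOperators Classical

variable {Ω : Type} [Fintype Ω]

/-- Probability that the random variable `X` takes the value `x` under the pmf `p`. -/
noncomputable def prEq {α : Type} (p : Ω → ℝ) (X : Ω → α) (x : α) : ℝ :=
  ∑ ω, if X ω = x then p ω else 0

/-- Shannon entropy of a finite random variable. -/
noncomputable def ent {α : Type} [Fintype α] (p : Ω → ℝ) (X : Ω → α) : ℝ :=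
  ∑ x, Real.negMulLog (prEq p X x)

/-- Conditional Shannon entropy `H(X | Y)`. -/
noncomputable def condEnt {α β : Type} [Fintype α] [Fintype β]
    (p : Ω → ℝ) (X : Ω → α) (Y : Ω → β) : ℝ :=
  ent p (fun ω => (X ω, Y ω)) - ent p Y

/-- Mutual information `I(X ; Y)`. -/
noncomputable def mutInf {α β : Type} [Fintype α] [Fintype β]
    (p : Ω → ℝ) (X : Ω → α) (Y : Ω → β) : ℝ :=
  ent p X + ent p Y - ent p (fun ω => (X ω, Y ω))

/-- Conditional mutual information `I(X ; Y | Z)`. -/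
noncomputable def condMutInf {α β γ : Type} [Fintype α] [Fintype β] [Fintype γ]
    (p : Ω → ℝ) (X : Ω → α) (Y : Ω → β) (Z : Ω → γ) : ℝ :=
  condEnt p X Z - condEnt p X (fun ω => (Y ω, Z ω))

/-- `X` and `Y` are conditionally independent given `Z`. -/
def CondIndep {α β γ : Type} (p : Ω → ℝ) (X : Ω → α) (Y : Ω → β) (Z : Ω → γ) : Prop :=
  ∀ x y z,
    prEq p (fun ω => (X ω, Y ω, Z ω)) (x, y, z) * prEq p Z z =
      prEq p (fun ω => (X ω, Z ω)) (x, z) * prEq p (fun ω => (Y ω, Z ω)) (y, z)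

/-- `X` and `Y` are independent. -/
def Indep {α β : Type} (p : Ω → ℝ) (X : Ω → α) (Y : Ω → β) : Prop :=
  ∀ x y, prEq p (fun ω => (X ω, Y ω)) (x, y) = prEq p X x * prEq p Y y

/-- `p` is a probability mass function on `Ω`. -/
def IsPMF (p : Ω → ℝ) : Prop := (∀ ω, 0 ≤ p ω) ∧ ∑ ω, p ω = 1


section Aux

lemma prEq_nonneg {α : Type} {p : Ω → ℝ} (hp : ∀ ω, 0 ≤ p ω) (X : Ω → α) (x : α) :
    0 ≤ prEq p X x := by
  apply Finset.sum_nonneg; intro ω _; split <;> simp [hp ω]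

lemma prEq_comp_inj {α β : Type} {p : Ω → ℝ} {g : α → β} (hg : Function.Injective g)
    (F : Ω → α) (t : α) :
    prEq p (fun ω => g (F ω)) (g t) = prEq p F t := by
  simp [prEq, hg.eq_iff]

lemma prEq_comp {α α' : Type} [Fintype α] {p : Ω → ℝ} (g : α → α') (F : Ω → α) (v : α') :
    prEq p (fun ω => g (F ω)) v = ∑ t, if g t = v then prEq p F t else 0 := by
  unfold prEq
  have h : ∀ t, (if g t = v then ∑ ω, if F ω = t then p ω else 0 else 0)
      = ∑ ω, if F ω = t ∧ g t = v then p ω else 0 := by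
    intro t; split <;> simp_all
  simp only [h]
  rw [Finset.sum_comm]
  apply Finset.sum_congr rfl
  intro ω _
  simp [ite_and, Finset.sum_ite_eq]

lemma ent_comp_equiv {α β : Type} [Fintype α] [Fintype β] {p : Ω → ℝ} (e : α ≃ β)
    (X : Ω → α) :
    ent p (fun ω => e (X ω)) = ent p X := by
  unfold ent
  rw [← Equiv.sum_comp e]
  apply Finset.sum_congr rfl
  intro a _
  rw [prEq_comp_inj e.injective]

lemma sum_negMulLog_condIndep {α β γ : Type} [Fintype α] [Fintype β] [Fintype γ]
    (P : α → β → γ → ℝ) (Pnn : ∀ y k z, 0 ≤ P y k z)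
    (hh : ∀ y k z, P y k z * (∑ y', ∑ k', P y' k' z)
        = (∑ k', P y k' z) * (∑ y', P y' k z)) :
    (∑ y, ∑ k, ∑ z, Real.negMulLog (P y k z)) + ∑ z, Real.negMulLog (∑ y, ∑ k, P y k z)
      = (∑ y, ∑ z, Real.negMulLog (∑ k, P y k z))
        + ∑ k, ∑ z, Real.negMulLog (∑ y, P y k z) := by
  set qyz : α → γ → ℝ := fun y z => ∑ k, P y k z with hqyz
  set qkz : β → γ → ℝ := fun k z => ∑ y, P y k z with hqkz
  set qz : γ → ℝ := fun z => ∑ y, ∑ k, P y k z with hqz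
  have key : ∀ y k z, Real.negMulLog (P y k z)
      = -(P y k z * Real.log (qyz y z)) - P y k z * Real.log (qkz k z)
        + P y k z * Real.log (qz z) := by
    intro y k z
    by_cases h0 : P y k z = 0
    · simp [h0, Real.negMulLog]
    have hP0 : 0 < P y k z := lt_of_le_of_ne (Pnn y k z) (Ne.symm h0)
    have h1 : 0 < qyz y z :=
      lt_of_lt_of_le hP0 (Finset.single_le_sum (fun k _ => Pnn y k z) (Finset.mem_univ k))
    have h2 : 0 < qkz k z :=
      lt_of_lt_of_le hP0 (Finset.single_le_sum (fun y _ => Pnn y k z) (Finset.mem_univ y))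
    have h3 : 0 < qz z :=
      lt_of_lt_of_le h1 (Finset.single_le_sum
        (fun y _ => Finset.sum_nonneg (fun k _ => Pnn y k z)) (Finset.mem_univ y))
    have hlog : Real.log (P y k z) + Real.log (qz z)
        = Real.log (qyz y z) + Real.log (qkz k z) := by
      rw [← Real.log_mul (ne_of_gt hP0) (ne_of_gt h3),
        ← Real.log_mul (ne_of_gt h1) (ne_of_gt h2), hh y k z]
    have : Real.log (P y k z)
        = Real.log (qyz y z) + Real.log (qkz k z) - Real.log (qz z) := by linarith
    rw [Real.negMulLog, this]; ring
  simp only [key]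
  have S1 : (∑ y, ∑ k, ∑ z, -(P y k z * Real.log (qyz y z)))
      = ∑ y, ∑ z, Real.negMulLog (qyz y z) := by
    refine Finset.sum_congr rfl fun y _ => ?_
    rw [Finset.sum_comm]
    refine Finset.sum_congr rfl fun z _ => ?_
    rw [Finset.sum_neg_distrib, ← Finset.sum_mul, Real.negMulLog]
    simp only [hqyz, hqkz, hqz]; ring
  have S2 : (∑ y, ∑ k, ∑ z, -(P y k z * Real.log (qkz k z)))
      = ∑ k, ∑ z, Real.negMulLog (qkz k z) := by
    rw [Finset.sum_comm]
    refine Finset.sum_congr rfl fun k _ => ?_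
    rw [Finset.sum_comm]
    refine Finset.sum_congr rfl fun z _ => ?_
    rw [Finset.sum_neg_distrib, ← Finset.sum_mul, Real.negMulLog]
    simp only [hqyz, hqkz, hqz]; ring
  have S3 : (∑ y, ∑ k, ∑ z, P y k z * Real.log (qz z))
      = -∑ z, Real.negMulLog (qz z) := by
    have : ∀ y, (∑ k, ∑ z, P y k z * Real.log (qz z))
        = ∑ z, (∑ k, P y k z) * Real.log (qz z) := by
      intro y; rw [Finset.sum_comm]
      exact Finset.sum_congr rfl fun z _ => (Finset.sum_mul _ _ _).symm
    simp only [this]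
    rw [Finset.sum_comm, ← Finset.sum_neg_distrib]
    refine Finset.sum_congr rfl fun z _ => ?_
    rw [← Finset.sum_mul, Real.negMulLog]
    simp only [hqyz, hqkz, hqz]; ring
  calc (∑ y, ∑ k, ∑ z, (-(P y k z * Real.log (qyz y z)) - P y k z * Real.log (qkz k z)
          + P y k z * Real.log (qz z))) + ∑ z, Real.negMulLog (qz z)
      = ((∑ y, ∑ k, ∑ z, -(P y k z * Real.log (qyz y z)))
          + (∑ y, ∑ k, ∑ z, -(P y k z * Real.log (qkz k z)))
          + (∑ y, ∑ k, ∑ z, P y k z * Real.log (qz z)))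
          + ∑ z, Real.negMulLog (qz z) := by
        simp [Finset.sum_add_distrib, Finset.sum_sub_distrib]; ring
    _ = _ := by rw [S1, S2, S3]; ring

lemma condIndep_ent {α β γ : Type} [Fintype α] [Fintype β] [Fintype γ]
    (p : Ω → ℝ) (hp : IsPMF p) (Y : Ω → α) (K : Ω → β) (Z : Ω → γ)
    (h : CondIndep p Y K Z) :
    ent p (fun ω => (Y ω, K ω, Z ω)) + ent p Z
      = ent p (fun ω => (Y ω, Z ω)) + ent p (fun ω => (K ω, Z ω)) := by
  set P : α → β → γ → ℝ := fun y k z => prEq p (fun ω => (Y ω, K ω, Z ω)) (y, k, z) with hP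
  have Pnn : ∀ y k z, 0 ≤ P y k z := fun y k z => prEq_nonneg hp.1 _ _
  have mYZ : ∀ y z, prEq p (fun ω => (Y ω, Z ω)) (y, z) = ∑ k, P y k z := by
    intro y z
    refine Eq.trans (prEq_comp (fun t : α × β × γ => (t.1, t.2.2))
      (fun ω => (Y ω, K ω, Z ω)) (y, z)) ?_
    rw [Fintype.sum_prod_type]
    simp [Fintype.sum_prod_type, Prod.ext_iff, ite_and, Finset.sum_ite_eq',
      Finset.sum_ite_irrel, hP]
  have mKZ : ∀ k z, prEq p (fun ω => (K ω, Z ω)) (k, z) = ∑ y, P y k z := by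
    intro k z
    refine Eq.trans (prEq_comp (fun t : α × β × γ => (t.2.1, t.2.2))
      (fun ω => (Y ω, K ω, Z ω)) (k, z)) ?_
    rw [Fintype.sum_prod_type]
    simp [Fintype.sum_prod_type, Prod.ext_iff, ite_and, Finset.sum_ite_eq',
      Finset.sum_ite_irrel, hP]
  have mZ : ∀ z, prEq p Z z = ∑ y, ∑ k, P y k z := by
    intro z
    refine Eq.trans (prEq_comp (fun t : α × β × γ => t.2.2)
      (fun ω => (Y ω, K ω, Z ω)) z) ?_
    rw [Fintype.sum_prod_type]
    simp [Fintype.sum_prod_type, Prod.ext_iff, ite_and, Finset.sum_ite_eq',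
      Finset.sum_ite_irrel, hP]
  have hh : ∀ y k z, P y k z * (∑ y', ∑ k', P y' k' z)
      = (∑ k', P y k' z) * (∑ y', P y' k z) := by
    intro y k z
    have := h y k z
    rw [mYZ, mKZ, mZ] at this
    exact this
  have E := sum_negMulLog_condIndep P Pnn hh
  have e1 : ent p (fun ω => (Y ω, K ω, Z ω)) = ∑ y, ∑ k, ∑ z, Real.negMulLog (P y k z) := by
    unfold ent
    rw [Fintype.sum_prod_type]
    exact Finset.sum_congr rfl fun y _ => Fintype.sum_prod_type _
  have e2 : ent p Z = ∑ z, Real.negMulLog (∑ y, ∑ k, P y k z) := by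
    unfold ent
    exact Finset.sum_congr rfl fun z _ => by rw [mZ]
  have e3 : ent p (fun ω => (Y ω, Z ω)) = ∑ y, ∑ z, Real.negMulLog (∑ k, P y k z) := by
    unfold ent
    rw [Fintype.sum_prod_type]
    exact Finset.sum_congr rfl fun y _ => Finset.sum_congr rfl fun z _ => by rw [mYZ]
  have e4 : ent p (fun ω => (K ω, Z ω)) = ∑ k, ∑ z, Real.negMulLog (∑ y, P y k z) := by
    unfold ent
    rw [Fintype.sum_prod_type]
    exact Finset.sum_congr rfl fun k _ => Finset.sum_congr rfl fun z _ => by rw [mKZ]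
  rw [e1, e2, e3, e4]
  exact E

lemma markov_deriv {A B C D : Type} [Fintype A] [Fintype B] [Fintype C] [Fintype D]
    (P : A → B → C → D → ℝ) (c : C → ℝ)
    (Pnn : ∀ x y k m, 0 ≤ P x y k m)
    (h1 : ∀ x y k m, P x y k m * (∑ y', ∑ m', P x y' k m')
        = (∑ m', P x y k m') * (∑ y', P x y' k m))
    (h2 : ∀ x y k, (∑ m, P x y k m) = c k * (∑ k', ∑ m, P x y k' m)) :
    ∀ x y k m, P x y k m * (∑ y', ∑ k', P x y' k' m)
      = (∑ k', P x y k' m) * (∑ y', P x y' k m) := by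
  intro x y k m
  set Pxy : A → B → ℝ := fun x y => ∑ k', ∑ m', P x y k' m' with hPxy
  set Px : A → ℝ := fun x => ∑ y', Pxy x y' with hPx
  have Pxynn : ∀ x y, 0 ≤ Pxy x y := fun x y =>
    Finset.sum_nonneg fun k _ => Finset.sum_nonneg fun m _ => Pnn x y k m
  have Pxnn : ∀ x, 0 ≤ Px x := fun x => Finset.sum_nonneg fun y _ => Pxynn x y
  have star : ∀ y k m, P x y k m * Px x = Pxy x y * (∑ y', P x y' k m) := by
    intro y k m
    have hsum : (∑ y', ∑ m', P x y' k m') = c k * Px x := by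
      rw [Finset.mul_sum]
      exact Finset.sum_congr rfl fun y' _ => h2 x y' k
    by_cases hc : c k = 0
    · have hyk0 : (∑ m', P x y k m') = 0 := by rw [h2, hc, zero_mul]
      have hP0 : P x y k m = 0 := by
        have hle : P x y k m ≤ ∑ m', P x y k m' :=
          Finset.single_le_sum (fun m _ => Pnn x y k m) (Finset.mem_univ m)
        linarith [Pnn x y k m]
      have hkm0 : (∑ y', P x y' k m) = 0 := by
        have h0 : (∑ y', ∑ m', P x y' k m') = 0 := by rw [hsum, hc, zero_mul]
        have h0' : ∀ y', (∑ m', P x y' k m') = 0 := by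
          intro y'
          have := (Finset.sum_eq_zero_iff_of_nonneg
            (fun y' _ => Finset.sum_nonneg fun m _ => Pnn x y' k m)).mp h0
          exact this y' (Finset.mem_univ y')
        refine Finset.sum_eq_zero fun y' _ => ?_
        have := (Finset.sum_eq_zero_iff_of_nonneg (fun m _ => Pnn x y' k m)).mp (h0' y')
        exact this m (Finset.mem_univ m)
      rw [hP0, hkm0, zero_mul, mul_zero]
    · apply mul_left_cancel₀ hc
      have := h1 x y k m
      rw [hsum] at this
      rw [h2 x y k] at this
      calc c k * (P x y k m * Px x) = P x y k m * (c k * Px x) := by ring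
        _ = c k * Pxy x y * (∑ y', P x y' k m) := this
        _ = c k * (Pxy x y * (∑ y', P x y' k m)) := by ring
  have star2 : (∑ k', P x y k' m) * Px x = Pxy x y * (∑ y', ∑ k', P x y' k' m) := by
    rw [Finset.sum_mul]
    have : ∀ k', P x y k' m * Px x = Pxy x y * (∑ y', P x y' k' m) :=
      fun k' => star y k' m
    simp only [this]
    rw [← Finset.mul_sum, Finset.sum_comm]
  by_cases hx : Px x = 0
  · have hall : ∀ y' k' m', P x y' k' m' = 0 := by
      intro y' k' m'
      have h0 : Pxy x y' = 0 := by
        have := (Finset.sum_eq_zero_iff_of_nonneg (fun y _ => Pxynn x y)).mp hx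
        exact this y' (Finset.mem_univ y')
      have := (Finset.sum_eq_zero_iff_of_nonneg
        (fun k _ => Finset.sum_nonneg fun m _ => Pnn x y' k m)).mp h0
      have := (Finset.sum_eq_zero_iff_of_nonneg (fun m _ => Pnn x y' k' m)).mp
        (this k' (Finset.mem_univ k'))
      exact this m' (Finset.mem_univ m')
    simp [hall]
  · apply mul_left_cancel₀ hx
    calc Px x * (P x y k m * (∑ y', ∑ k', P x y' k' m))
        = (P x y k m * Px x) * (∑ y', ∑ k', P x y' k' m) := by ring
      _ = (Pxy x y * (∑ y', P x y' k m)) * (∑ y', ∑ k', P x y' k' m) := by rw [star]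
      _ = (Pxy x y * (∑ y', ∑ k', P x y' k' m)) * (∑ y', P x y' k m) := by ring
      _ = ((∑ k', P x y k' m) * Px x) * (∑ y', P x y' k m) := by rw [star2]
      _ = Px x * ((∑ k', P x y k' m) * (∑ y', P x y' k m)) := by ring

end Aux

theorem stmt8 {𝓧 𝓨 𝓚 𝓜 : Type} [Fintype 𝓧] [Fintype 𝓨] [Fintype 𝓚] [Fintype 𝓜]
    (p : Ω → ℝ) (hp : IsPMF p)
    (Xn : Ω → 𝓧) (Yn : Ω → 𝓨) (K : Ω → 𝓚) (M : Ω → 𝓜)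
    (hind : Indep p K (fun ω => (Xn ω, Yn ω)))
    (hmc : CondIndep p Yn M (fun ω => (Xn ω, K ω))) :
    condMutInf p Xn K M - condMutInf p Yn K M =
      condMutInf p Xn K (fun ω => (Yn ω, M ω)) := by
  classical
  set F : Ω → 𝓧 × 𝓨 × 𝓚 × 𝓜 := fun ω => (Xn ω, Yn ω, K ω, M ω) with hF
  set P : 𝓧 → 𝓨 → 𝓚 → 𝓜 → ℝ := fun x y k m => prEq p F (x, y, k, m) with hPdef
  have Pnn : ∀ x y k m, 0 ≤ P x y k m := fun x y k m => prEq_nonneg hp.1 _ _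
  -- translations for hmc
  have T1 : ∀ x y k m, prEq p (fun ω => (Yn ω, M ω, (Xn ω, K ω))) (y, m, (x, k))
      = P x y k m := by
    intro x y k m
    exact prEq_comp_inj (g := fun t : 𝓧 × 𝓨 × 𝓚 × 𝓜 => (t.2.1, t.2.2.2, (t.1, t.2.2.1)))
      (Function.LeftInverse.injective
        (g := fun s : 𝓨 × 𝓜 × 𝓧 × 𝓚 => (s.2.2.1, s.1, s.2.2.2, s.2.1)) fun t => rfl)
      F (x, y, k, m)
  have T2 : ∀ x k, prEq p (fun ω => (Xn ω, K ω)) (x, k) = ∑ y, ∑ m, P x y k m := by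
    intro x k
    refine Eq.trans (prEq_comp (fun t : 𝓧 × 𝓨 × 𝓚 × 𝓜 => (t.1, t.2.2.1)) F (x, k)) ?_
    simp only [Fintype.sum_prod_type]
    simp [Prod.ext_iff, ite_and, Finset.sum_ite_irrel, Finset.sum_ite_eq', hPdef]
  have T3 : ∀ x y k, prEq p (fun ω => (Yn ω, (Xn ω, K ω))) (y, (x, k))
      = ∑ m, P x y k m := by
    intro x y k
    refine Eq.trans (prEq_comp (fun t : 𝓧 × 𝓨 × 𝓚 × 𝓜 => (t.2.1, (t.1, t.2.2.1)))
      F (y, (x, k))) ?_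
    simp only [Fintype.sum_prod_type]
    simp [Prod.ext_iff, ite_and, Finset.sum_ite_irrel, Finset.sum_ite_eq', hPdef]
  have T4 : ∀ x k m, prEq p (fun ω => (M ω, (Xn ω, K ω))) (m, (x, k))
      = ∑ y, P x y k m := by
    intro x k m
    refine Eq.trans (prEq_comp (fun t : 𝓧 × 𝓨 × 𝓚 × 𝓜 => (t.2.2.2, (t.1, t.2.2.1)))
      F (m, (x, k))) ?_
    simp only [Fintype.sum_prod_type]
    simp [Prod.ext_iff, ite_and, Finset.sum_ite_irrel, Finset.sum_ite_eq', hPdef]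
  have T5 : ∀ x y k, prEq p (fun ω => (K ω, (Xn ω, Yn ω))) (k, (x, y))
      = ∑ m, P x y k m := by
    intro x y k
    refine Eq.trans (prEq_comp (fun t : 𝓧 × 𝓨 × 𝓚 × 𝓜 => (t.2.2.1, (t.1, t.2.1)))
      F (k, (x, y))) ?_
    simp only [Fintype.sum_prod_type]
    simp [Prod.ext_iff, ite_and, Finset.sum_ite_irrel, Finset.sum_ite_eq', hPdef]
  have T6 : ∀ x y, prEq p (fun ω => (Xn ω, Yn ω)) (x, y) = ∑ k, ∑ m, P x y k m := by
    intro x y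
    refine Eq.trans (prEq_comp (fun t : 𝓧 × 𝓨 × 𝓚 × 𝓜 => (t.1, t.2.1)) F (x, y)) ?_
    simp only [Fintype.sum_prod_type]
    simp [Prod.ext_iff, ite_and, Finset.sum_ite_irrel, Finset.sum_ite_eq', hPdef]
  have h1 : ∀ x y k m, P x y k m * (∑ y', ∑ m', P x y' k m')
      = (∑ m', P x y k m') * (∑ y', P x y' k m) := by
    intro x y k m
    have := hmc y m (x, k)
    rw [T1, T3, T4] at this
    rw [T2] at this
    exact this
  have h2 : ∀ x y k, (∑ m, P x y k m)
      = prEq p K k * (∑ k', ∑ m, P x y k' m) := by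
    intro x y k
    have := hind k (x, y)
    rw [T5, T6] at this
    exact this
  have key := markov_deriv P (prEq p K) Pnn h1 h2
  -- conditional independence of Yn and K given (Xn, M)
  have hCI : CondIndep p Yn K (fun ω => (Xn ω, M ω)) := by
    rintro y k ⟨x, m⟩
    have U1 : prEq p (fun ω => (Yn ω, K ω, (Xn ω, M ω))) (y, k, (x, m)) = P x y k m :=
      prEq_comp_inj (g := fun t : 𝓧 × 𝓨 × 𝓚 × 𝓜 => (t.2.1, t.2.2.1, (t.1, t.2.2.2)))
        (Function.LeftInverse.injective
          (g := fun s : 𝓨 × 𝓚 × 𝓧 × 𝓜 => (s.2.2.1, s.1, s.2.1, s.2.2.2)) fun t => rfl)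
        F (x, y, k, m)
    have U2 : prEq p (fun ω => (Xn ω, M ω)) (x, m) = ∑ y', ∑ k', P x y' k' m := by
      refine Eq.trans (prEq_comp (fun t : 𝓧 × 𝓨 × 𝓚 × 𝓜 => (t.1, t.2.2.2)) F (x, m)) ?_
      simp only [Fintype.sum_prod_type]
      simp [Prod.ext_iff, ite_and, Finset.sum_ite_irrel, Finset.sum_ite_eq', hPdef]
    have U3 : prEq p (fun ω => (Yn ω, (Xn ω, M ω))) (y, (x, m)) = ∑ k', P x y k' m := by
      refine Eq.trans (prEq_comp (fun t : 𝓧 × 𝓨 × 𝓚 × 𝓜 => (t.2.1, (t.1, t.2.2.2)))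
        F (y, (x, m))) ?_
      simp only [Fintype.sum_prod_type]
      simp [Prod.ext_iff, ite_and, Finset.sum_ite_irrel, Finset.sum_ite_eq', hPdef]
    have U4 : prEq p (fun ω => (K ω, (Xn ω, M ω))) (k, (x, m)) = ∑ y', P x y' k m := by
      refine Eq.trans (prEq_comp (fun t : 𝓧 × 𝓨 × 𝓚 × 𝓜 => (t.2.2.1, (t.1, t.2.2.2)))
        F (k, (x, m))) ?_
      simp only [Fintype.sum_prod_type]
      simp [Prod.ext_iff, ite_and, Finset.sum_ite_irrel, Finset.sum_ite_eq', hPdef]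
    rw [U1, U2, U3, U4]
    exact key x y k m
  have CE : ent p (fun ω => (Yn ω, K ω, (Xn ω, M ω))) + ent p (fun ω => (Xn ω, M ω))
      = ent p (fun ω => (Yn ω, (Xn ω, M ω))) + ent p (fun ω => (K ω, (Xn ω, M ω))) :=
    condIndep_ent p hp Yn K (fun ω => (Xn ω, M ω)) hCI
  have R1 : ent p (fun ω => (Xn ω, (K ω, M ω))) = ent p (fun ω => (K ω, (Xn ω, M ω))) :=
    ent_comp_equiv (⟨fun t => (t.2.1, (t.1, t.2.2)), fun t => (t.2.1, (t.1, t.2.2)),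
      fun t => rfl, fun t => rfl⟩ : 𝓚 × 𝓧 × 𝓜 ≃ 𝓧 × 𝓚 × 𝓜)
      (fun ω => (K ω, (Xn ω, M ω)))
  have R2 : ent p (fun ω => (Yn ω, (K ω, M ω))) = ent p (fun ω => (K ω, (Yn ω, M ω))) :=
    ent_comp_equiv (⟨fun t => (t.2.1, (t.1, t.2.2)), fun t => (t.2.1, (t.1, t.2.2)),
      fun t => rfl, fun t => rfl⟩ : 𝓚 × 𝓨 × 𝓜 ≃ 𝓨 × 𝓚 × 𝓜)
      (fun ω => (K ω, (Yn ω, M ω)))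
  have R3 : ent p (fun ω => (Xn ω, (Yn ω, M ω))) = ent p (fun ω => (Yn ω, (Xn ω, M ω))) :=
    ent_comp_equiv (⟨fun t => (t.2.1, (t.1, t.2.2)), fun t => (t.2.1, (t.1, t.2.2)),
      fun t => rfl, fun t => rfl⟩ : 𝓨 × 𝓧 × 𝓜 ≃ 𝓧 × 𝓨 × 𝓜)
      (fun ω => (Yn ω, (Xn ω, M ω)))
  have R4 : ent p (fun ω => (Xn ω, (K ω, (Yn ω, M ω))))
      = ent p (fun ω => (Yn ω, (K ω, (Xn ω, M ω)))) :=
    ent_comp_equiv (⟨fun t => (t.2.2.1, (t.2.1, (t.1, t.2.2.2))),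
      fun t => (t.2.2.1, (t.2.1, (t.1, t.2.2.2))), fun t => rfl, fun t => rfl⟩ :
      𝓨 × 𝓚 × 𝓧 × 𝓜 ≃ 𝓧 × 𝓚 × 𝓨 × 𝓜)
      (fun ω => (Yn ω, (K ω, (Xn ω, M ω))))
  simp only [condMutInf, condEnt]
  linarith [CE, R1, R2, R3, R4]
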